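/- Let f_i(y) = -c_i U(y) + (σ/2)(y - w_i)² for i = 1,…,N, where U satisfies U' > 0 wherever differentiable, c_i > 0, σ > 0, and w_1 ≤ w_2 ≤ … ≤ w_N. If y* is optimal for minimizing ∑ f_i(y_i) subject to y_1 ≤ … ≤ y_N, then y*_1 ≥ w_1. (Lower bound part of Lemma 5.) -/
import Mathlib


theorem stmt_15 (n : ℕ) (hn : 0 < n) (B σ : ℝ) (hσ : 0 < σ)
    (c w : Fin n → ℝ) (hc : ∀ i, 0 < c i) (hw : Monotone w)
    (U U' : ℝ → ℝ) (hmono : StrictMono U)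
    (hd : ∀ y : ℝ, y ≠ B → HasDerivAt U (U' y) y)
    (hU' : ∀ y : ℝ, y ≠ B → 0 < U' y)
    (ystar : Fin n → ℝ) (hfeas : Monotone ystar)
    (hopt : ∀ z : Fin n → ℝ, Monotone z →
      (∑ i, (-c i * U (ystar i) + σ / 2 * (ystar i - w i) ^ 2)) ≤
      (∑ i, (-c i * U (z i) + σ / 2 * (z i - w i) ^ 2))) :
    w ⟨0, hn⟩ ≤ ystar ⟨0, hn⟩ := by
  by_contra h
  push_neg at h
  set w0 := w ⟨0, hn⟩ with hw0
  set z : Fin n → ℝ := fun i => max (ystar i) w0 with hz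
  have hzm : Monotone z := fun i j hij => max_le_max (hfeas hij) le_rfl
  have hkey := hopt z hzm
  have hlt : (∑ i, (-c i * U (z i) + σ / 2 * (z i - w i) ^ 2)) <
      (∑ i, (-c i * U (ystar i) + σ / 2 * (ystar i - w i) ^ 2)) := by
    apply Finset.sum_lt_sum
    · intro i _
      rcases le_or_gt w0 (ystar i) with hle | hlti
      · simp [hz, max_eq_left hle]
      · have hw0i : w0 ≤ w i := hw (Fin.le_def.mpr (Nat.zero_le _))
        have hzi : z i = w0 := max_eq_right hlti.le
        rw [hzi]
        have hU : U (ystar i) < U w0 := hmono hlti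
        have hci := hc i
        have h1 : 0 < c i * (U w0 - U (ystar i)) := mul_pos hci (sub_pos.mpr hU)
        nlinarith [mul_nonneg (sub_nonneg.mpr hw0i) (sub_pos.mpr hlti).le,
          mul_pos hσ (sub_pos.mpr hlti)]
    · refine ⟨⟨0, hn⟩, Finset.mem_univ _, ?_⟩
      have hzi : z ⟨0, hn⟩ = w0 := max_eq_right h.le
      rw [hzi]
      have hU : U (ystar ⟨0, hn⟩) < U w0 := hmono h
      have hci := hc ⟨0, hn⟩
      nlinarith [sq_nonneg (ystar ⟨0, hn⟩ - w0), mul_pos hci (sub_pos.mpr hU)]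
  linarith
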